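/- arXiv:1904.12432 — 4 statements merged into one kernel-verified Lean document; each statement's English description precedes it below -/
import Mathlib

section
/- Let Z = ⟨a_1,…,a_{2m+1}⟩ be an N-fence with 2m+1 arcs, listed in zig-zag order. Then Z has exactly one admissible arc-set, namely the set {a_1, a_3, …, a_{2m+1}} of odd-indexed arcs (in 0/1-vector notation, (1(01)^m)). -/
/-- A finite simple directed graph, given by a finite vertex set and a finite
set of arcs (ordered pairs of vertices) whose endpoints lie in the vertex set. -/
structure Dgraph (V : Type*) where
  verts : Finset V
  arcs : Finset (V × V)
  tail_mem : ∀ a ∈ arcs, a.1 ∈ verts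
  head_mem : ∀ a ∈ arcs, a.2 ∈ verts

namespace Dgraph

variable {V : Type*}

/-- The in-degree of a vertex. -/
def indeg [DecidableEq V] (G : Dgraph V) (v : V) : ℕ :=
  (G.arcs.filter fun a => a.2 = v).card

/-- The out-degree of a vertex. -/
def outdeg [DecidableEq V] (G : Dgraph V) (v : V) : ℕ :=
  (G.arcs.filter fun a => a.1 = v).card

/-- A leaf is a vertex of in-degree 1 and out-degree 0. -/
def IsLeaf [DecidableEq V] (G : Dgraph V) (v : V) : Prop :=
  v ∈ G.verts ∧ G.indeg v = 1 ∧ G.outdeg v = 0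

/-- A directed graph is acyclic if it has no directed cycle. -/
def Acyclic (G : Dgraph V) : Prop :=
  ∀ v : V, ¬ Relation.TransGen (fun u w => (u, w) ∈ G.arcs) v v

def IsSubgraph (H G : Dgraph V) : Prop :=
  H.verts ⊆ G.verts ∧ H.arcs ⊆ G.arcs

/-- The subgraph induced by a set of arcs: its vertices are all endpoints of those arcs. -/
def ofArcs [DecidableEq V] (A : Finset (V × V)) : Dgraph V where
  verts := A.image Prod.fst ∪ A.image Prod.snd
  arcs := A
  tail_mem := fun a ha => Finset.mem_union_left _ (Finset.mem_image_of_mem _ ha)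
  head_mem := fun a ha => Finset.mem_union_right _ (Finset.mem_image_of_mem _ ha)

/-- A rooted binary phylogenetic `X`-network: a finite simple directed acyclic graph
with a unique root of in-degree 0 and out-degree 1 or 2, whose leaf set is the
nonempty finite set `X`, and all of whose other vertices have
`{in-degree, out-degree} = {1, 2}`. -/
def IsRBPN [DecidableEq V] (N : Dgraph V) (X : Finset V) : Prop :=
  N.Acyclic ∧ X.Nonempty ∧ X ⊆ N.verts ∧
  ∃ ρ ∈ N.verts,
    N.indeg ρ = 0 ∧ (N.outdeg ρ = 1 ∨ N.outdeg ρ = 2) ∧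
    (∀ v ∈ N.verts, N.indeg v = 0 → v = ρ) ∧
    (∀ v ∈ N.verts, (N.IsLeaf v ↔ v ∈ X)) ∧
    (∀ v ∈ N.verts, v ∉ X → v ≠ ρ →
      (N.indeg v = 1 ∧ N.outdeg v = 2) ∨ (N.indeg v = 2 ∧ N.outdeg v = 1))

/-- A rooted binary phylogenetic `X`-tree: a rooted binary phylogenetic `X`-network
with no vertex of in-degree 2. -/
def IsRBPT [DecidableEq V] (T : Dgraph V) (X : Finset V) : Prop :=
  IsRBPN T X ∧ ∀ v ∈ T.verts, T.indeg v ≠ 2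

/-- `H` is obtained from `G` by inserting one new (subdividing) vertex into one arc. -/
def SubdivideArc [DecidableEq V] (G H : Dgraph V) : Prop :=
  ∃ u v w : V, (u, v) ∈ G.arcs ∧ w ∉ G.verts ∧
    H.verts = insert w G.verts ∧
    H.arcs = insert (u, w) (insert (w, v) (G.arcs.erase (u, v)))

/-- `IsSubdivisionOf T τ` : `τ` is obtained from `T` by inserting zero or more
subdividing vertices into arcs. -/
inductive IsSubdivisionOf [DecidableEq V] : Dgraph V → Dgraph V → Prop
  | refl (G : Dgraph V) : IsSubdivisionOf G G
  | step {G H K : Dgraph V} : IsSubdivisionOf G H → SubdivideArc H K → IsSubdivisionOf G K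

/-- A support tree of `N`: a spanning subgraph of `N` that can be obtained from some
rooted binary phylogenetic `X`-tree by inserting zero or more vertices into each arc. -/
def IsSupportTree [DecidableEq V] (N : Dgraph V) (X : Finset V) (τ : Dgraph V) : Prop :=
  τ.verts = N.verts ∧ τ.arcs ⊆ N.arcs ∧
  ∃ T : Dgraph V, IsRBPT T X ∧ IsSubdivisionOf T τ

/-- `N` is tree-based if it has a support tree. -/
def IsTreeBased [DecidableEq V] (N : Dgraph V) (X : Finset V) : Prop :=
  ∃ τ : Dgraph V, IsSupportTree N X τ

/-- `S` is an admissible arc-set of `G`. -/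
def IsAdmissible [DecidableEq V] (G : Dgraph V) (S : Finset (V × V)) : Prop :=
  S ⊆ G.arcs ∧
  (∀ a ∈ G.arcs, (G.indeg a.2 = 1 ∨ G.outdeg a.1 = 1) → a ∈ S) ∧
  (∀ a₁ ∈ G.arcs, ∀ a₂ ∈ G.arcs, a₁ ≠ a₂ → a₁.2 = a₂.2 →
    ((a₁ ∈ S ∧ a₂ ∉ S) ∨ (a₁ ∉ S ∧ a₂ ∈ S))) ∧
  (∀ a₁ ∈ G.arcs, ∀ a₂ ∈ G.arcs, a₁ ≠ a₂ → a₁.1 = a₂.1 → (a₁ ∈ S ∨ a₂ ∈ S))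

end Dgraph

namespace Dgraph

variable {V : Type*}

/-- The `k`-th arc (`k ≥ 1`) of a zig-zag written `v₀ < v₁ > v₂ < v₃ > ⋯`
(so `a₁ = (v₁, v₀)`, `a₂ = (v₁, v₂)`, `a₃ = (v₃, v₂)`, `a₄ = (v₃, v₄)`, …). -/
def mArc (v : ℕ → V) (k : ℕ) : V × V :=
  if k % 2 = 1 then (v k, v (k - 1)) else (v (k - 1), v k)

/-- The `k`-th arc (`k ≥ 1`) of a zig-zag written `v₀ > v₁ < v₂ > v₃ < ⋯`
(so `a₁ = (v₀, v₁)`, `a₂ = (v₂, v₁)`, `a₃ = (v₂, v₃)`, …). -/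
def nArc (v : ℕ → V) (k : ℕ) : V × V :=
  if k % 2 = 1 then (v (k - 1), v k) else (v k, v (k - 1))

/-- `Z` can be written cyclically as `v₀ < v₁ > v₂ < ⋯ > v_m = v₀` with `m` even,
`m ≥ 4` (a crown). -/
def CrownForm [DecidableEq V] (Z : Finset (V × V)) : Prop :=
  ∃ (m : ℕ) (v : ℕ → V), 4 ≤ m ∧ m % 2 = 0 ∧ v m = v 0 ∧ Z.card = m ∧
    Z = (Finset.Icc 1 m).image (mArc v)

/-- `Z` can be written as `v₀ < v₁ > v₂ < ⋯ < v_{m-1} > v_m` with `m` even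
(an M-fence). -/
def MFenceForm [DecidableEq V] (Z : Finset (V × V)) : Prop :=
  ∃ (m : ℕ) (v : ℕ → V), m % 2 = 0 ∧ Z.card = m ∧
    Z = (Finset.Icc 1 m).image (mArc v)

/-- `Z` can be written as `v₀ > v₁ < v₂ > ⋯ < v_{m-1} > v_m` with `m` odd
(an N-fence). -/
def NFenceForm [DecidableEq V] (Z : Finset (V × V)) : Prop :=
  ∃ (m : ℕ) (v : ℕ → V), m % 2 = 1 ∧ Z.card = m ∧
    Z = (Finset.Icc 1 m).image (nArc v)

end Dgraph

section Stmt6Aux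

variable {V : Type*} [DecidableEq V] {m : ℕ} {v : ℕ → V}

private lemma narc_odd {k : ℕ} (h : k % 2 = 1) :
    Dgraph.nArc v k = (v (k - 1), v k) := by
  simp [Dgraph.nArc, h]

private lemma narc_even {k : ℕ} (h : k % 2 = 0) :
    Dgraph.nArc v k = (v k, v (k - 1)) := by
  simp [Dgraph.nArc, h]

private lemma narc_inj (hinj : Set.InjOn v (Set.Icc 0 (2 * m + 1))) {j k : ℕ}
    (hj1 : 1 ≤ j) (hjn : j ≤ 2 * m + 1) (hk1 : 1 ≤ k) (hkn : k ≤ 2 * m + 1)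
    (h : Dgraph.nArc v j = Dgraph.nArc v k) : j = k := by
  have vi : ∀ a b : ℕ, a ≤ 2 * m + 1 → b ≤ 2 * m + 1 → v a = v b → a = b := fun a b ha hb hab =>
    hinj ⟨Nat.zero_le _, ha⟩ ⟨Nat.zero_le _, hb⟩ hab
  rcases Nat.mod_two_eq_zero_or_one j with hj2 | hj2 <;>
    rcases Nat.mod_two_eq_zero_or_one k with hk2 | hk2
  · rw [narc_even hj2, narc_even hk2, Prod.ext_iff] at h
    exact vi j k hjn hkn h.1
  · rw [narc_even hj2, narc_odd hk2, Prod.ext_iff] at h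
    have h1 := vi j (k - 1) hjn (by omega) h.1
    have h2 := vi (j - 1) k (by omega) hkn h.2
    omega
  · rw [narc_odd hj2, narc_even hk2, Prod.ext_iff] at h
    have h1 := vi (j - 1) k (by omega) hkn h.1
    have h2 := vi j (k - 1) hjn (by omega) h.2
    omega
  · rw [narc_odd hj2, narc_odd hk2, Prod.ext_iff] at h
    exact vi j k hjn hkn h.2

private lemma mem_A {a : V × V} :
    a ∈ (Finset.Icc 1 (2 * m + 1)).image (Dgraph.nArc v) ↔
      ∃ k, 1 ≤ k ∧ k ≤ 2 * m + 1 ∧ Dgraph.nArc v k = a := by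
  simp [Finset.mem_image, Finset.mem_Icc, and_assoc]

private lemma narc_mem_A {k : ℕ} (hk1 : 1 ≤ k) (hkn : k ≤ 2 * m + 1) :
    Dgraph.nArc v k ∈ (Finset.Icc 1 (2 * m + 1)).image (Dgraph.nArc v) :=
  Finset.mem_image_of_mem _ (Finset.mem_Icc.mpr ⟨hk1, hkn⟩)

private lemma mem_Sodd (hinj : Set.InjOn v (Set.Icc 0 (2 * m + 1))) {k : ℕ}
    (hk1 : 1 ≤ k) (hkn : k ≤ 2 * m + 1) :
    Dgraph.nArc v k ∈ (Finset.Icc 0 m).image (fun i => Dgraph.nArc v (2 * i + 1)) ↔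
      k % 2 = 1 := by
  simp only [Finset.mem_image, Finset.mem_Icc]
  constructor
  · rintro ⟨i, ⟨-, him⟩, hi⟩
    have := narc_inj hinj (by omega) (by omega) hk1 hkn hi
    omega
  · intro hk2
    exact ⟨k / 2, ⟨Nat.zero_le _, by omega⟩, by rw [show 2 * (k / 2) + 1 = k by omega]⟩

/-- the tail of arc `k` is `v (tail index)`, head is `v (head index)` -/
private lemma narc_fst {k : ℕ} :
    (Dgraph.nArc v k).1 = v (if k % 2 = 1 then k - 1 else k) := by
  rcases Nat.mod_two_eq_zero_or_one k with h | h <;> simp [narc_odd, narc_even, h]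

private lemma narc_snd {k : ℕ} :
    (Dgraph.nArc v k).2 = v (if k % 2 = 1 then k else k - 1) := by
  rcases Nat.mod_two_eq_zero_or_one k with h | h <;> simp [narc_odd, narc_even, h]

private lemma outdeg_v0 (hinj : Set.InjOn v (Set.Icc 0 (2 * m + 1))) :
    (Dgraph.ofArcs ((Finset.Icc 1 (2 * m + 1)).image (Dgraph.nArc v))).outdeg (v 0) = 1 := by
  have vi : ∀ a b : ℕ, a ≤ 2 * m + 1 → b ≤ 2 * m + 1 → v a = v b → a = b := fun a b ha hb hab =>
    hinj ⟨Nat.zero_le _, ha⟩ ⟨Nat.zero_le _, hb⟩ hab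
  have hfil : (((Finset.Icc 1 (2 * m + 1)).image (Dgraph.nArc v)).filter
      (fun a => a.1 = v 0)) = {Dgraph.nArc v 1} := by
    ext a
    simp only [Finset.mem_filter, Finset.mem_singleton, mem_A]
    constructor
    · rintro ⟨⟨k, hk1, hkn, rfl⟩, hta⟩
      rw [narc_fst] at hta
      rcases Nat.mod_two_eq_zero_or_one k with h | h
      · rw [if_neg (by omega)] at hta
        have := vi k 0 hkn (by omega) hta
        omega
      · rw [if_pos h] at hta
        have := vi (k - 1) 0 (by omega) (by omega) hta
        have : k = 1 := by omega
        rw [this]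
    · rintro rfl
      refine ⟨⟨1, le_refl _, by omega, rfl⟩, ?_⟩
      rw [narc_fst, if_pos (by omega)]
  show (((Finset.Icc 1 (2 * m + 1)).image (Dgraph.nArc v)).filter (fun a => a.1 = v 0)).card = 1
  rw [hfil, Finset.card_singleton]

private lemma indeg_even_ne_one (hinj : Set.InjOn v (Set.Icc 0 (2 * m + 1))) {k : ℕ}
    (hk2 : k % 2 = 0) (hk1 : 1 ≤ k) (hkn : k ≤ 2 * m + 1) :
    (Dgraph.ofArcs ((Finset.Icc 1 (2 * m + 1)).image (Dgraph.nArc v))).indeg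
      ((Dgraph.nArc v k).2) ≠ 1 := by
  have hk : 2 ≤ k := by omega
  have hkn' : k ≤ 2 * m := by omega
  have h1 : Dgraph.nArc v (k - 1) ∈ (((Finset.Icc 1 (2 * m + 1)).image (Dgraph.nArc v)).filter
      (fun a => a.2 = (Dgraph.nArc v k).2)) := by
    refine Finset.mem_filter.mpr ⟨narc_mem_A (by omega) (by omega), ?_⟩
    rw [narc_snd, narc_snd, if_pos (by omega), if_neg (by omega)]
  have h2 : Dgraph.nArc v k ∈ (((Finset.Icc 1 (2 * m + 1)).image (Dgraph.nArc v)).filter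
      (fun a => a.2 = (Dgraph.nArc v k).2)) :=
    Finset.mem_filter.mpr ⟨narc_mem_A hk1 hkn, rfl⟩
  have hne : Dgraph.nArc v (k - 1) ≠ Dgraph.nArc v k := fun h => by
    have := narc_inj hinj (by omega) (by omega) hk1 hkn h
    omega
  have : 1 < (((Finset.Icc 1 (2 * m + 1)).image (Dgraph.nArc v)).filter
      (fun a => a.2 = (Dgraph.nArc v k).2)).card :=
    Finset.one_lt_card.mpr ⟨_, h1, _, h2, hne⟩
  show (((Finset.Icc 1 (2 * m + 1)).image (Dgraph.nArc v)).filter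
      (fun a => a.2 = (Dgraph.nArc v k).2)).card ≠ 1
  omega

private lemma outdeg_even_ne_one (hinj : Set.InjOn v (Set.Icc 0 (2 * m + 1))) {k : ℕ}
    (hk2 : k % 2 = 0) (hk1 : 1 ≤ k) (hkn : k ≤ 2 * m + 1) :
    (Dgraph.ofArcs ((Finset.Icc 1 (2 * m + 1)).image (Dgraph.nArc v))).outdeg
      ((Dgraph.nArc v k).1) ≠ 1 := by
  have hk : 2 ≤ k := by omega
  have hkn' : k ≤ 2 * m := by omega
  have h1 : Dgraph.nArc v (k + 1) ∈ (((Finset.Icc 1 (2 * m + 1)).image (Dgraph.nArc v)).filter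
      (fun a => a.1 = (Dgraph.nArc v k).1)) := by
    refine Finset.mem_filter.mpr ⟨narc_mem_A (by omega) (by omega), ?_⟩
    rw [narc_fst, narc_fst, if_pos (by omega), if_neg (by omega)]
    exact congrArg v (by omega)
  have h2 : Dgraph.nArc v k ∈ (((Finset.Icc 1 (2 * m + 1)).image (Dgraph.nArc v)).filter
      (fun a => a.1 = (Dgraph.nArc v k).1)) :=
    Finset.mem_filter.mpr ⟨narc_mem_A hk1 hkn, rfl⟩
  have hne : Dgraph.nArc v (k + 1) ≠ Dgraph.nArc v k := fun h => by
    have := narc_inj hinj (by omega) (by omega) hk1 hkn h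
    omega
  have : 1 < (((Finset.Icc 1 (2 * m + 1)).image (Dgraph.nArc v)).filter
      (fun a => a.1 = (Dgraph.nArc v k).1)).card :=
    Finset.one_lt_card.mpr ⟨_, h1, _, h2, hne⟩
  show (((Finset.Icc 1 (2 * m + 1)).image (Dgraph.nArc v)).filter
      (fun a => a.1 = (Dgraph.nArc v k).1)).card ≠ 1
  omega

end Stmt6Aux

/-- Let `Z = ⟨a₁, …, a_{2m+1}⟩` be an N-fence with `2m+1` arcs,
written `v₀ > v₁ < v₂ > ⋯ > v_{2m+1}` with distinct vertices `v₀, …, v_{2m+1}`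
(so `a_k = nArc v k`).  Then `Z` has exactly one admissible arc-set, namely the set
`{a₁, a₃, …, a_{2m+1}}` of odd-indexed arcs. -/
theorem stmt6 {V : Type*} [DecidableEq V] (m : ℕ) (v : ℕ → V)
    (hinj : Set.InjOn v (Set.Icc 0 (2 * m + 1))) :
    ∀ S : Finset (V × V),
      Dgraph.IsAdmissible
          (Dgraph.ofArcs ((Finset.Icc 1 (2 * m + 1)).image (Dgraph.nArc v))) S ↔
        S = (Finset.Icc 0 m).image (fun i => Dgraph.nArc v (2 * i + 1)) := by
  intro S
  have vi : ∀ a b : ℕ, a ≤ 2 * m + 1 → b ≤ 2 * m + 1 → v a = v b → a = b := fun a b ha hb hab =>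
    hinj ⟨Nat.zero_le _, ha⟩ ⟨Nat.zero_le _, hb⟩ hab
  constructor
  · rintro ⟨hsub, h1, h2, h3⟩
    have key : ∀ i, 2 * i + 1 ≤ 2 * m + 1 → Dgraph.nArc v (2 * i + 1) ∈ S ∧
        (1 ≤ i → Dgraph.nArc v (2 * i) ∉ S) := by
      intro i
      induction i with
      | zero =>
        intro _
        refine ⟨?_, fun h => absurd h (by omega)⟩
        apply h1 _ (narc_mem_A (by omega) (by omega))
        right
        have : (Dgraph.nArc v (2 * 0 + 1)).1 = v 0 := by
          rw [narc_fst, if_pos (by omega)]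
        rw [this]
        exact outdeg_v0 hinj
      | succ i ih =>
        intro hle
        have hodd := (ih (by omega)).1
        have hhead : (Dgraph.nArc v (2 * i + 1)).2 = (Dgraph.nArc v (2 * i + 2)).2 := by
          rw [narc_snd, narc_snd, if_pos (by omega), if_neg (by omega)]
          exact congrArg v (by omega)
        have hne : Dgraph.nArc v (2 * i + 1) ≠ Dgraph.nArc v (2 * i + 2) := fun h => by
          have := narc_inj hinj (by omega) (by omega) (by omega) (by omega) h
          omega
        have heven : Dgraph.nArc v (2 * i + 2) ∉ S := by
          rcases h2 _ (narc_mem_A (by omega) (by omega)) _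
              (narc_mem_A (by omega) (by omega)) hne hhead with h | h
          · exact h.2
          · exact absurd hodd h.1
        have htail : (Dgraph.nArc v (2 * i + 2)).1 = (Dgraph.nArc v (2 * i + 3)).1 := by
          rw [narc_fst, narc_fst, if_neg (by omega), if_pos (by omega)]
          exact congrArg v (by omega)
        have hne2 : Dgraph.nArc v (2 * i + 2) ≠ Dgraph.nArc v (2 * i + 3) := fun h => by
          have := narc_inj hinj (by omega) (by omega) (by omega) (by omega) h
          omega
        have hodd2 : Dgraph.nArc v (2 * i + 3) ∈ S := by
          rcases h3 _ (narc_mem_A (by omega) (by omega)) _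
              (narc_mem_A (by omega) (by omega)) hne2 htail with h | h
          · exact absurd h heven
          · exact h
        constructor
        · rw [show 2 * (i + 1) + 1 = 2 * i + 3 by ring]
          exact hodd2
        · intro _
          rw [show 2 * (i + 1) = 2 * i + 2 by ring]
          exact heven
    ext a
    constructor
    · intro haS
      have haA : a ∈ (Finset.Icc 1 (2 * m + 1)).image (Dgraph.nArc v) := hsub haS
      obtain ⟨k, hk1, hkn, rfl⟩ := mem_A.mp haA
      rw [mem_Sodd hinj hk1 hkn]
      by_contra hk2
      have hk2 : k % 2 = 0 := by omega
      have := (key (k / 2) (by omega)).2 (by omega)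
      rw [show 2 * (k / 2) = k by omega] at this
      exact this haS
    · intro h
      obtain ⟨i, hi, rfl⟩ := Finset.mem_image.mp h
      simp only [Finset.mem_Icc] at hi
      exact (key i (by omega)).1
  · rintro rfl
    refine ⟨?_, ?_, ?_, ?_⟩
    · intro a ha
      obtain ⟨i, hi, rfl⟩ := Finset.mem_image.mp ha
      simp only [Finset.mem_Icc] at hi
      exact narc_mem_A (by omega) (by omega)
    · rintro a haA hdeg
      obtain ⟨k, hk1, hkn, rfl⟩ := mem_A.mp haA
      rw [mem_Sodd hinj hk1 hkn]
      by_contra hk2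
      have hk2 : k % 2 = 0 := by omega
      rcases hdeg with h | h
      · exact indeg_even_ne_one hinj hk2 hk1 hkn h
      · exact outdeg_even_ne_one hinj hk2 hk1 hkn h
    · rintro a₁ h₁ a₂ h₂ hne hhd
      obtain ⟨j, hj1, hjn, rfl⟩ := mem_A.mp h₁
      obtain ⟨k, hk1, hkn, rfl⟩ := mem_A.mp h₂
      have hjk : j ≠ k := fun h => hne (by rw [h])
      rw [narc_snd, narc_snd] at hhd
      have hidx := vi _ _ (by split <;> omega) (by split <;> omega) hhd
      rcases Nat.mod_two_eq_zero_or_one j with hj2 | hj2 <;>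
        rcases Nat.mod_two_eq_zero_or_one k with hk2 | hk2
      · rw [if_neg (by omega), if_neg (by omega)] at hidx
        omega
      · rw [if_neg (by omega), if_pos hk2] at hidx
        right
        refine ⟨fun h => ?_, (mem_Sodd hinj hk1 hkn).mpr hk2⟩
        have := (mem_Sodd hinj hj1 hjn).mp h
        omega
      · rw [if_pos hj2, if_neg (by omega)] at hidx
        left
        refine ⟨(mem_Sodd hinj hj1 hjn).mpr hj2, fun h => ?_⟩
        have := (mem_Sodd hinj hk1 hkn).mp h
        omega
      · rw [if_pos hj2, if_pos hk2] at hidx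
        omega
    · rintro a₁ h₁ a₂ h₂ hne htl
      obtain ⟨j, hj1, hjn, rfl⟩ := mem_A.mp h₁
      obtain ⟨k, hk1, hkn, rfl⟩ := mem_A.mp h₂
      have hjk : j ≠ k := fun h => hne (by rw [h])
      rw [narc_fst, narc_fst] at htl
      have hidx := vi _ _ (by split <;> omega) (by split <;> omega) htl
      rcases Nat.mod_two_eq_zero_or_one j with hj2 | hj2 <;>
        rcases Nat.mod_two_eq_zero_or_one k with hk2 | hk2
      · rw [if_neg (by omega), if_neg (by omega)] at hidx
        omega
      · rw [if_neg (by omega), if_pos hk2] at hidx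
        right
        exact (mem_Sodd hinj hk1 hkn).mpr hk2
      · rw [if_pos hj2, if_neg (by omega)] at hidx
        left
        exact (mem_Sodd hinj hj1 hjn).mpr hj2
      · rw [if_pos hj2, if_pos hk2] at hidx
        omega
end

section
/- Let Z = ⟨a_1,…,a_{2m}⟩ be an M-fence with 2m arcs, listed in zig-zag order. Then the admissible arc-sets of Z are exactly the m sets given in 0/1-vector notation by (1(01)^p(10)^q 1) for nonnegative integers p, q with p + q = m − 1; in particular, an M-fence with 2m arcs has exactly m admissible arc-sets. -/
/-- The admissible arc-set of an M-fence `⟨a₁, …, a_{2m}⟩` encoded by the 0/1-vector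
`(1(01)^p(10)^q 1)` with `p + q = m - 1`: it consists of the odd-indexed arcs `a_k`
with `k ≤ 2p+1` together with the even-indexed arcs `a_k` with `k ≥ 2p+2`. -/
def mFenceAdm {V : Type*} [DecidableEq V] (v : ℕ → V) (m p : ℕ) : Finset (V × V) :=
  ((Finset.Icc 1 (2 * m)).filter
      (fun k => (k % 2 = 1 ∧ k ≤ 2 * p + 1) ∨ (k % 2 = 0 ∧ 2 * p + 2 ≤ k))).image
    (Dgraph.mArc v)


section Stmt7Aux

variable {V : Type*} [DecidableEq V] {m : ℕ} {v : ℕ → V}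

lemma mArc_fst (v : ℕ → V) (k : ℕ) :
    (Dgraph.mArc v k).1 = if k % 2 = 1 then v k else v (k-1) := by
  unfold Dgraph.mArc; split <;> rfl

lemma mArc_snd (v : ℕ → V) (k : ℕ) :
    (Dgraph.mArc v k).2 = if k % 2 = 1 then v (k-1) else v k := by
  unfold Dgraph.mArc; split <;> rfl

lemma mem_arcs (v : ℕ → V) {m k : ℕ} (hk1 : 1 ≤ k) (hk2 : k ≤ 2*m) :
    Dgraph.mArc v k ∈ (Finset.Icc 1 (2*m)).image (Dgraph.mArc v) :=
  Finset.mem_image_of_mem _ (Finset.mem_Icc.2 ⟨hk1, hk2⟩)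

variable (hv : ∀ a b : ℕ, a ≤ 2*m → b ≤ 2*m → v a = v b → a = b)
include hv

lemma mArc_inj {k l : ℕ} (hk1 : 1 ≤ k) (hk2 : k ≤ 2*m) (hl1 : 1 ≤ l) (hl2 : l ≤ 2*m)
    (h : Dgraph.mArc v k = Dgraph.mArc v l) : k = l := by
  rw [Prod.ext_iff, mArc_fst, mArc_fst, mArc_snd, mArc_snd] at h
  split_ifs at h with pk pl pl
  · exact hv _ _ hk2 hl2 h.1
  · have h1 := hv _ _ hk2 (by omega) h.1
    have h2 := hv _ _ (by omega) hl2 h.2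
    omega
  · have h1 := hv _ _ (by omega) hl2 h.1
    have h2 := hv _ _ hk2 (by omega) h.2
    omega
  · exact hv _ _ hk2 hl2 h.2

lemma mem_mFenceAdm {p k : ℕ} (hk1 : 1 ≤ k) (hk2 : k ≤ 2*m) :
    Dgraph.mArc v k ∈ mFenceAdm v m p ↔
      ((k % 2 = 1 ∧ k ≤ 2*p+1) ∨ (k % 2 = 0 ∧ 2*p+2 ≤ k)) := by
  unfold mFenceAdm
  constructor
  · intro h
    obtain ⟨l, hl, he⟩ := Finset.mem_image.1 h
    rw [Finset.mem_filter, Finset.mem_Icc] at hl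
    have hlk := mArc_inj hv hl.1.1 hl.1.2 hk1 hk2 he
    rw [hlk] at hl
    exact hl.2
  · intro h
    exact Finset.mem_image_of_mem _
      (Finset.mem_filter.2 ⟨Finset.mem_Icc.2 ⟨hk1, hk2⟩, h⟩)

lemma indeg_v0 (hm : 1 ≤ m) :
    (Dgraph.ofArcs ((Finset.Icc 1 (2*m)).image (Dgraph.mArc v))).indeg (v 0) = 1 := by
  show ((((Finset.Icc 1 (2*m)).image (Dgraph.mArc v)).filter (fun a => a.2 = v 0)).card) = 1
  have hset : (((Finset.Icc 1 (2*m)).image (Dgraph.mArc v)).filter (fun a => a.2 = v 0))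
      = {Dgraph.mArc v 1} := by
    ext a
    simp only [Finset.mem_filter, Finset.mem_image, Finset.mem_Icc, Finset.mem_singleton]
    constructor
    · rintro ⟨⟨k, ⟨hk1, hk2⟩, rfl⟩, hh⟩
      rw [mArc_snd] at hh
      split_ifs at hh with pk
      · have h1 := hv _ _ (by omega) (by omega) hh
        have h2 : k = 1 := by omega
        rw [h2]
      · have h1 := hv _ _ (by omega) (by omega) hh
        omega
    · rintro rfl
      refine ⟨⟨1, ⟨le_refl 1, by omega⟩, rfl⟩, ?_⟩
      rw [mArc_snd, if_pos (show 1 % 2 = 1 from rfl)]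
  rw [hset, Finset.card_singleton]

lemma indeg_v2m (hm : 1 ≤ m) :
    (Dgraph.ofArcs ((Finset.Icc 1 (2*m)).image (Dgraph.mArc v))).indeg (v (2*m)) = 1 := by
  show ((((Finset.Icc 1 (2*m)).image (Dgraph.mArc v)).filter (fun a => a.2 = v (2*m))).card) = 1
  have hset : (((Finset.Icc 1 (2*m)).image (Dgraph.mArc v)).filter (fun a => a.2 = v (2*m)))
      = {Dgraph.mArc v (2*m)} := by
    ext a
    simp only [Finset.mem_filter, Finset.mem_image, Finset.mem_Icc, Finset.mem_singleton]
    constructor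
    · rintro ⟨⟨k, ⟨hk1, hk2⟩, rfl⟩, hh⟩
      rw [mArc_snd] at hh
      split_ifs at hh with pk
      · have h1 := hv _ _ (by omega) (by omega) hh
        omega
      · have h1 := hv _ _ (by omega) (by omega) hh
        rw [h1]
    · rintro rfl
      refine ⟨⟨2*m, ⟨by omega, le_refl _⟩, rfl⟩, ?_⟩
      rw [mArc_snd, if_neg (show ¬ (2*m) % 2 = 1 by omega)]
  rw [hset, Finset.card_singleton]

lemma indeg_ge_two {k : ℕ} (hk1 : 2 ≤ k) (hk2 : k + 1 ≤ 2*m) :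
    2 ≤ (Dgraph.ofArcs ((Finset.Icc 1 (2*m)).image (Dgraph.mArc v))).indeg
      ((Dgraph.mArc v k).2) := by
  show 2 ≤ (((Finset.Icc 1 (2*m)).image (Dgraph.mArc v)).filter
      (fun a => a.2 = (Dgraph.mArc v k).2)).card
  rcases Nat.mod_two_eq_zero_or_one k with pk | pk
  · refine Finset.one_lt_card.2 ⟨Dgraph.mArc v k, ?_, Dgraph.mArc v (k+1), ?_, ?_⟩
    · exact Finset.mem_filter.2 ⟨mem_arcs v (by omega) (by omega), rfl⟩
    · refine Finset.mem_filter.2 ⟨mem_arcs v (by omega) (by omega), ?_⟩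
      rw [mArc_snd, mArc_snd, if_pos (show (k+1) % 2 = 1 by omega),
        if_neg (show ¬ k % 2 = 1 by omega)]
      congr 1
    · intro h
      have := mArc_inj hv (by omega) (by omega) (by omega) (by omega) h
      omega
  · refine Finset.one_lt_card.2 ⟨Dgraph.mArc v (k-1), ?_, Dgraph.mArc v k, ?_, ?_⟩
    · refine Finset.mem_filter.2 ⟨mem_arcs v (by omega) (by omega), ?_⟩
      rw [mArc_snd, mArc_snd, if_neg (show ¬ (k-1) % 2 = 1 by omega),
        if_pos pk]
    · exact Finset.mem_filter.2 ⟨mem_arcs v (by omega) (by omega), rfl⟩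
    · intro h
      have := mArc_inj hv (by omega) (by omega) (by omega) (by omega) h
      omega

lemma outdeg_ge_two {k : ℕ} (hk1 : 1 ≤ k) (hk2 : k ≤ 2*m) :
    2 ≤ (Dgraph.ofArcs ((Finset.Icc 1 (2*m)).image (Dgraph.mArc v))).outdeg
      ((Dgraph.mArc v k).1) := by
  show 2 ≤ (((Finset.Icc 1 (2*m)).image (Dgraph.mArc v)).filter
      (fun a => a.1 = (Dgraph.mArc v k).1)).card
  rcases Nat.mod_two_eq_zero_or_one k with pk | pk
  · refine Finset.one_lt_card.2 ⟨Dgraph.mArc v (k-1), ?_, Dgraph.mArc v k, ?_, ?_⟩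
    · refine Finset.mem_filter.2 ⟨mem_arcs v (by omega) (by omega), ?_⟩
      rw [mArc_fst, mArc_fst, if_pos (show (k-1) % 2 = 1 by omega),
        if_neg (show ¬ k % 2 = 1 by omega)]
    · exact Finset.mem_filter.2 ⟨mem_arcs v (by omega) (by omega), rfl⟩
    · intro h
      have := mArc_inj hv (by omega) (by omega) (by omega) (by omega) h
      omega
  · refine Finset.one_lt_card.2 ⟨Dgraph.mArc v k, ?_, Dgraph.mArc v (k+1), ?_, ?_⟩
    · exact Finset.mem_filter.2 ⟨mem_arcs v (by omega) (by omega), rfl⟩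
    · refine Finset.mem_filter.2 ⟨mem_arcs v (by omega) (by omega), ?_⟩
      rw [mArc_fst, mArc_fst, if_neg (show ¬ (k+1) % 2 = 1 by omega),
        if_pos pk]
      congr 1
    · intro h
      have := mArc_inj hv (by omega) (by omega) (by omega) (by omega) h
      omega

lemma same_head {k l : ℕ} (hk1 : 1 ≤ k) (hk2 : k ≤ 2*m) (hl1 : 1 ≤ l) (hl2 : l ≤ 2*m)
    (hne : k ≠ l) (h : (Dgraph.mArc v k).2 = (Dgraph.mArc v l).2) :
    (k % 2 = 0 ∧ l = k+1) ∨ (l % 2 = 0 ∧ k = l+1) := by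
  rw [mArc_snd, mArc_snd] at h
  split_ifs at h with pk pl pl
  · have := hv _ _ (by omega) (by omega) h; omega
  · have := hv _ _ (by omega) (by omega) h; omega
  · have := hv _ _ (by omega) (by omega) h; omega
  · have := hv _ _ (by omega) (by omega) h; omega

lemma same_tail {k l : ℕ} (hk1 : 1 ≤ k) (hk2 : k ≤ 2*m) (hl1 : 1 ≤ l) (hl2 : l ≤ 2*m)
    (hne : k ≠ l) (h : (Dgraph.mArc v k).1 = (Dgraph.mArc v l).1) :
    (k % 2 = 1 ∧ l = k+1) ∨ (l % 2 = 1 ∧ k = l+1) := by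
  rw [mArc_fst, mArc_fst] at h
  split_ifs at h with pk pl pl
  · have := hv _ _ (by omega) (by omega) h; omega
  · have := hv _ _ (by omega) (by omega) h; omega
  · have := hv _ _ (by omega) (by omega) h; omega
  · have := hv _ _ (by omega) (by omega) h; omega

end Stmt7Aux

/-- Let `Z = ⟨a₁, …, a_{2m}⟩` be an M-fence with `2m` arcs, written
`v₀ < v₁ > v₂ < ⋯ < v_{2m-1} > v_{2m}` with distinct vertices `v₀, …, v_{2m}`
(so `a_k = mArc v k`).  The admissible arc-sets of `Z` are exactly the sets
`(1(01)^p(10)^q 1)` over nonnegative `p, q` with `p + q = m - 1`; in particular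
`Z` has exactly `m` admissible arc-sets. -/
theorem stmt7 {V : Type*} [DecidableEq V] (m : ℕ) (hm : 1 ≤ m) (v : ℕ → V)
    (hinj : Set.InjOn v (Set.Icc 0 (2 * m))) :
    (∀ S : Finset (V × V),
      Dgraph.IsAdmissible (Dgraph.ofArcs ((Finset.Icc 1 (2 * m)).image (Dgraph.mArc v))) S ↔
        ∃ p q : ℕ, p + q = m - 1 ∧ S = mFenceAdm v m p) ∧
    {S : Finset (V × V) |
        Dgraph.IsAdmissible
          (Dgraph.ofArcs ((Finset.Icc 1 (2 * m)).image (Dgraph.mArc v))) S}.ncard = m := by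
  have hv : ∀ a b : ℕ, a ≤ 2*m → b ≤ 2*m → v a = v b → a = b :=
    fun a b ha hb h => hinj ⟨Nat.zero_le a, ha⟩ ⟨Nat.zero_le b, hb⟩ h
  have hmain : ∀ S : Finset (V × V),
      Dgraph.IsAdmissible (Dgraph.ofArcs ((Finset.Icc 1 (2 * m)).image (Dgraph.mArc v))) S ↔
        ∃ p q : ℕ, p + q = m - 1 ∧ S = mFenceAdm v m p := by
    intro S
    constructor
    · rintro ⟨hS, h1, h2, h3⟩
      have hC1 : Dgraph.mArc v 1 ∈ S := by
        apply h1 _ (mem_arcs v (by omega) (by omega))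
        left
        rw [mArc_snd, if_pos (show 1 % 2 = 1 from rfl)]
        exact indeg_v0 hv hm
      have hC1' : Dgraph.mArc v (2*m) ∈ S := by
        apply h1 _ (mem_arcs v (by omega) (by omega))
        left
        rw [mArc_snd, if_neg (show ¬ (2*m) % 2 = 1 by omega)]
        exact indeg_v2m hv hm
      have hC2 : ∀ i, 1 ≤ i → i + 1 ≤ m →
          (Dgraph.mArc v (2*i) ∈ S ↔ Dgraph.mArc v (2*i+1) ∉ S) := by
        intro i hi1 hi2
        have hne : Dgraph.mArc v (2*i) ≠ Dgraph.mArc v (2*i+1) := by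
          intro h
          have := mArc_inj hv (by omega) (by omega) (by omega) (by omega) h
          omega
        have hhead : (Dgraph.mArc v (2*i)).2 = (Dgraph.mArc v (2*i+1)).2 := by
          rw [mArc_snd, mArc_snd, if_neg (show ¬ (2*i) % 2 = 1 by omega),
            if_pos (show (2*i+1) % 2 = 1 by omega)]
          congr 1
        have := h2 _ (mem_arcs v (by omega) (by omega)) _
          (mem_arcs v (by omega) (by omega)) hne hhead
        tauto
      have hC3 : ∀ i, 1 ≤ i → i ≤ m →
          (Dgraph.mArc v (2*i-1) ∈ S ∨ Dgraph.mArc v (2*i) ∈ S) := by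
        intro i hi1 hi2
        have hne : Dgraph.mArc v (2*i-1) ≠ Dgraph.mArc v (2*i) := by
          intro h
          have := mArc_inj hv (by omega) (by omega) (by omega) (by omega) h
          omega
        have htail : (Dgraph.mArc v (2*i-1)).1 = (Dgraph.mArc v (2*i)).1 := by
          rw [mArc_fst, mArc_fst, if_pos (show (2*i-1) % 2 = 1 by omega),
            if_neg (show ¬ (2*i) % 2 = 1 by omega)]
        exact h3 _ (mem_arcs v (by omega) (by omega)) _
          (mem_arcs v (by omega) (by omega)) hne htail
      have h2mS : Dgraph.mArc v (2*(m-1)+2) ∈ S := by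
        rw [show 2*(m-1)+2 = 2*m by omega]
        exact hC1'
      have hexists : ∃ i, Dgraph.mArc v (2*i+2) ∈ S := ⟨m-1, h2mS⟩
      obtain ⟨p, hPp, hmin⟩ : ∃ p, Dgraph.mArc v (2*p+2) ∈ S ∧
          ∀ i < p, Dgraph.mArc v (2*i+2) ∉ S :=
        ⟨Nat.find hexists, Nat.find_spec hexists, fun i h => Nat.find_min hexists h⟩
      have hple : p + 1 ≤ m := by
        by_contra hc
        exact hmin (m-1) (by omega) h2mS
      have mono : ∀ i, p ≤ i → i + 1 ≤ m → Dgraph.mArc v (2*i+2) ∈ S := by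
        intro i hpi
        induction i, hpi using Nat.le_induction with
        | base => intro _; exact hPp
        | succ i hpi ih =>
          intro him
          have hmem : Dgraph.mArc v (2*i+2) ∈ S := ih (by omega)
          have h23 : Dgraph.mArc v (2*i+3) ∉ S := by
            have hiff := hC2 (i+1) (by omega) (by omega)
            rw [show 2*(i+1) = 2*i+2 by ring, show 2*i+2+1 = 2*i+3 by ring] at hiff
            exact hiff.1 hmem
          have hor := hC3 (i+2) (by omega) (by omega)
          rw [show 2*(i+2)-1 = 2*i+3 by omega, show 2*(i+2) = 2*i+4 by ring] at hor
          rcases hor with h | h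
          · exact absurd h h23
          · rw [show 2*(i+1)+2 = 2*i+4 by ring]
            exact h
      have key : ∀ k, 1 ≤ k → k ≤ 2*m →
          (Dgraph.mArc v k ∈ S ↔
            ((k % 2 = 1 ∧ k ≤ 2*p+1) ∨ (k % 2 = 0 ∧ 2*p+2 ≤ k))) := by
        intro k hk1 hk2
        rcases Nat.mod_two_eq_zero_or_one k with pk | pk
        · obtain ⟨i, rfl⟩ : ∃ i, k = 2*i+2 := ⟨(k-2)/2, by omega⟩
          constructor
          · intro h
            right
            refine ⟨by omega, ?_⟩
            by_contra hc
            exact hmin i (by omega) h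
          · rintro (⟨h, _⟩ | ⟨_, h⟩)
            · omega
            · exact mono i (by omega) (by omega)
        · rcases Nat.eq_or_lt_of_le hk1 with h1 | h1
          · rw [← h1]
            constructor
            · intro _
              exact Or.inl ⟨rfl, by omega⟩
            · intro _
              exact hC1
          · obtain ⟨i, rfl⟩ : ∃ i, k = 2*i+1 := ⟨k/2, by omega⟩
            have hi1 : 1 ≤ i := by omega
            have hi2 : i + 1 ≤ m := by omega
            have hiff := hC2 i hi1 hi2
            have heven : Dgraph.mArc v (2*i) ∈ S ↔ p ≤ i - 1 := by
              rw [show 2*i = 2*(i-1)+2 by omega]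
              constructor
              · intro h
                by_contra hc
                exact hmin (i-1) (by omega) h
              · intro h
                exact mono (i-1) h (by omega)
            constructor
            · intro h
              left
              refine ⟨by omega, ?_⟩
              have hno : Dgraph.mArc v (2*i) ∉ S := fun hc => (hiff.1 hc) h
              have : ¬ p ≤ i - 1 := fun hc => hno (heven.2 hc)
              omega
            · rintro (⟨_, h⟩ | ⟨hpar, _⟩)
              · by_contra hc
                have h2i : Dgraph.mArc v (2*i) ∈ S := hiff.2 hc
                have := heven.1 h2i
                omega
              · omega
      refine ⟨p, m - 1 - p, by omega, ?_⟩
      ext a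
      constructor
      · intro ha
        have haA : a ∈ (Finset.Icc 1 (2*m)).image (Dgraph.mArc v) := hS ha
        obtain ⟨k, hk, rfl⟩ := Finset.mem_image.1 haA
        rw [Finset.mem_Icc] at hk
        exact (mem_mFenceAdm hv hk.1 hk.2).2 ((key k hk.1 hk.2).1 ha)
      · intro ha
        unfold mFenceAdm at ha
        obtain ⟨k, hk, rfl⟩ := Finset.mem_image.1 ha
        rw [Finset.mem_filter, Finset.mem_Icc] at hk
        exact (key k hk.1.1 hk.1.2).2 hk.2
    · rintro ⟨p, q, hpq, rfl⟩
      have hpm : p + 1 ≤ m := by omega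
      refine ⟨?_, ?_, ?_, ?_⟩
      · show mFenceAdm v m p ⊆ (Finset.Icc 1 (2*m)).image (Dgraph.mArc v)
        unfold mFenceAdm
        exact Finset.image_subset_image (Finset.filter_subset _ _)
      · intro a ha hdeg
        replace ha : a ∈ (Finset.Icc 1 (2*m)).image (Dgraph.mArc v) := ha
        obtain ⟨k, hk, rfl⟩ := Finset.mem_image.1 ha
        rw [Finset.mem_Icc] at hk
        rcases hdeg with hd | hd
        · have hk' : k = 1 ∨ k = 2*m := by
            by_contra hc
            push_neg at hc
            have := indeg_ge_two hv (k := k) (by omega) (by omega)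
            omega
          rw [mem_mFenceAdm hv hk.1 hk.2]
          rcases hk' with rfl | rfl
          · exact Or.inl ⟨rfl, by omega⟩
          · exact Or.inr ⟨by omega, by omega⟩
        · have := outdeg_ge_two hv hk.1 hk.2
          omega
      · intro a₁ ha₁ a₂ ha₂ hne hhead
        replace ha₁ : a₁ ∈ (Finset.Icc 1 (2*m)).image (Dgraph.mArc v) := ha₁
        replace ha₂ : a₂ ∈ (Finset.Icc 1 (2*m)).image (Dgraph.mArc v) := ha₂
        obtain ⟨k, hk, rfl⟩ := Finset.mem_image.1 ha₁
        obtain ⟨l, hl, rfl⟩ := Finset.mem_image.1 ha₂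
        rw [Finset.mem_Icc] at hk hl
        have hkl : k ≠ l := fun h => hne (by rw [h])
        have := same_head hv hk.1 hk.2 hl.1 hl.2 hkl hhead
        rw [mem_mFenceAdm hv hk.1 hk.2, mem_mFenceAdm hv hl.1 hl.2]
        omega
      · intro a₁ ha₁ a₂ ha₂ hne htail
        replace ha₁ : a₁ ∈ (Finset.Icc 1 (2*m)).image (Dgraph.mArc v) := ha₁
        replace ha₂ : a₂ ∈ (Finset.Icc 1 (2*m)).image (Dgraph.mArc v) := ha₂
        obtain ⟨k, hk, rfl⟩ := Finset.mem_image.1 ha₁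
        obtain ⟨l, hl, rfl⟩ := Finset.mem_image.1 ha₂
        rw [Finset.mem_Icc] at hk hl
        have hkl : k ≠ l := fun h => hne (by rw [h])
        have := same_tail hv hk.1 hk.2 hl.1 hl.2 hkl htail
        rw [mem_mFenceAdm hv hk.1 hk.2, mem_mFenceAdm hv hl.1 hl.2]
        omega
  refine ⟨hmain, ?_⟩
  have hseteq : {S : Finset (V × V) |
      Dgraph.IsAdmissible
        (Dgraph.ofArcs ((Finset.Icc 1 (2 * m)).image (Dgraph.mArc v))) S}
      = mFenceAdm v m '' Set.Iic (m - 1) := by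
    ext S
    simp only [Set.mem_setOf_eq, hmain S, Set.mem_image, Set.mem_Iic]
    constructor
    · rintro ⟨p, q, hpq, rfl⟩
      exact ⟨p, by omega, rfl⟩
    · rintro ⟨p, hp, rfl⟩
      exact ⟨p, m - 1 - p, by omega, rfl⟩
  rw [hseteq]
  have hinj2 : Set.InjOn (mFenceAdm v m) (Set.Iic (m - 1)) := by
    intro p hp p' hp' h
    simp only [Set.mem_Iic] at hp hp'
    have hmem : ∀ r r' : ℕ, r ≤ m - 1 → r' ≤ m - 1 → mFenceAdm v m r = mFenceAdm v m r' →
        r ≤ r' := by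
      intro r r' hr hr' hrr
      have h1 : Dgraph.mArc v (2*r+1) ∈ mFenceAdm v m r :=
        (mem_mFenceAdm hv (by omega) (by omega)).2 (Or.inl ⟨by omega, by omega⟩)
      rw [hrr] at h1
      have := (mem_mFenceAdm hv (p := r') (by omega) (by omega)).1 h1
      omega
    exact le_antisymm (hmem p p' hp hp' h) (hmem p' p hp' hp h.symm)
  rw [Set.ncard_image_of_injOn hinj2, ← Finset.coe_Iic, Set.ncard_coe_finset,
    Nat.card_Iic]
  omega
end

section
/- Let d ≥ 1 and n_1,…,n_d ≥ 1 be integers, Ω = ∏_{i=1}^d {1,…,n_i} with componentwise order ≤, and ≤* a linear extension of ≤, with enumeration τ^{(1)} <* ⋯ <* τ^{(|Ω|)}. Let Γ, Child, parent, child*, sibling*, and the sets Q_j be as defined. Then for every j with 1 ≤ j ≤ |Ω|, we have τ^{(j)} ∈ Q_j, and τ^{(ℓ)} ∉ Q_j for every ℓ < j. -/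
/-- `Om n` is the product set `Ω = ∏_{i=1}^d {1, …, n i}`, as a finite set of
vectors `Fin d → ℕ`. -/
def Om {d : ℕ} (n : Fin d → ℕ) : Finset (Fin d → ℕ) :=
  Fintype.piFinset fun i => Finset.Icc 1 (n i)

/-- The componentwise partial order on vectors. -/
def compLE {d : ℕ} (x y : Fin d → ℕ) : Prop :=
  ∀ i, x i ≤ y i

/-- The arc relation of the graph `Γ`: `isArcG n t t'` holds iff `t' ∈ Ω`,
`t' ≠ (1, …, 1)`, and `t = t' - e(t')`, where `e(t')` is the unit vector supported
at the first index `i` with `t' i > 1`. -/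
def isArcG {d : ℕ} (n : Fin d → ℕ) (t t' : Fin d → ℕ) : Prop :=
  t' ∈ Om n ∧ t' ≠ (fun _ => 1) ∧
  ∃ i : Fin d, 1 < t' i ∧ (∀ j : Fin d, j < i → ¬ 1 < t' j) ∧
    t = Function.update t' i (t' i - 1)

/-- The children of `t` in the tree `Γ`. -/
def ChildG {d : ℕ} (n : Fin d → ℕ) (t : Fin d → ℕ) : Set (Fin d → ℕ) :=
  {t' | isArcG n t t'}

/-- The set `{σ ∈ Child(parent(t')) : t' <* σ}` of later-ranked siblings of `t'`
(empty when `t'` has no parent). -/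
def SibG {d : ℕ} (n : Fin d → ℕ) (r : (Fin d → ℕ) → (Fin d → ℕ) → Prop)
    (t' : Fin d → ℕ) : Set (Fin d → ℕ) :=
  {s | ∃ p : Fin d → ℕ, isArcG n p t' ∧ isArcG n p s ∧ r t' s ∧ t' ≠ s}

/-- `leastSet r S` is the set of `≤*`-least elements of `S` (a singleton when `S` is
a nonempty subset of a set linearly ordered by `r`, and empty when `S = ∅`). -/
def leastSet {α : Type*} (r : α → α → Prop) (S : Set α) : Set α :=
  {x | x ∈ S ∧ ∀ y ∈ S, r x y}

/-- The sets `Q_j`: `Q_1 = {τ 1}` and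
`Q_j = (Q_{j-1} \ {τ (j-1)}) ∪ {child*(τ (j-1)), sibling*(τ (j-1))}` for `j ≥ 2`,
where `child*` and `sibling*` contribute nothing when the relevant set is empty. -/
def Qset {d : ℕ} (n : Fin d → ℕ) (r : (Fin d → ℕ) → (Fin d → ℕ) → Prop)
    (τ : ℕ → (Fin d → ℕ)) : ℕ → Set (Fin d → ℕ)
  | 0 => ∅
  | 1 => {τ 1}
  | j + 2 =>
      (Qset n r τ (j + 1) \ {τ (j + 1)}) ∪
        leastSet r (ChildG n (τ (j + 1))) ∪ leastSet r (SibG n r (τ (j + 1)))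

lemma mem_Om {d : ℕ} {n : Fin d → ℕ} {x : Fin d → ℕ} :
    x ∈ Om n ↔ ∀ i, 1 ≤ x i ∧ x i ≤ n i := by
  simp [Om, Fintype.mem_piFinset, Finset.mem_Icc]

lemma arc_parent_mem {d : ℕ} {n : Fin d → ℕ} {p x : Fin d → ℕ}
    (h : isArcG n p x) : p ∈ Om n := by
  obtain ⟨hx, -, i, hi, -, rfl⟩ := h
  rw [mem_Om] at hx ⊢
  intro j
  rcases eq_or_ne j i with rfl | hne
  · rw [Function.update_self]
    exact ⟨by omega, le_trans (Nat.sub_le _ _) (hx j).2⟩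
  · rw [Function.update_of_ne hne]; exact hx j

lemma arc_le {d : ℕ} {n : Fin d → ℕ} {p x : Fin d → ℕ}
    (h : isArcG n p x) : compLE p x := by
  obtain ⟨hx, -, i, hi, -, rfl⟩ := h
  intro j
  rcases eq_or_ne j i with rfl | hne
  · rw [Function.update_self]; omega
  · rw [Function.update_of_ne hne]

lemma arc_ne {d : ℕ} {n : Fin d → ℕ} {p x : Fin d → ℕ}
    (h : isArcG n p x) : p ≠ x := by
  obtain ⟨hx, -, i, hi, -, rfl⟩ := h
  intro hcon
  have := congrFun hcon i
  rw [Function.update_self] at this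
  omega

lemma arc_unique {d : ℕ} {n : Fin d → ℕ} {p q x : Fin d → ℕ}
    (h : isArcG n p x) (h' : isArcG n q x) : p = q := by
  obtain ⟨-, -, i, hi, hmin, rfl⟩ := h
  obtain ⟨-, -, i', hi', hmin', rfl⟩ := h'
  suffices hii : i = i' by rw [hii]
  rcases lt_trichotomy i i' with hlt | heq | hgt
  · exact absurd hi (hmin' i hlt)
  · exact heq
  · exact absurd hi' (hmin i' hgt)

lemma arc_exists {d : ℕ} {n : Fin d → ℕ} {x : Fin d → ℕ}
    (hx : x ∈ Om n) (hne : x ≠ fun _ => 1) : ∃ p, isArcG n p x := by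
  have hex : ∃ i, 1 < x i := by
    by_contra h
    push_neg at h
    apply hne
    funext i
    have h1 := (mem_Om.mp hx i).1
    have h2 := h i
    omega
  obtain ⟨i0, hi0⟩ := hex
  set S := Finset.univ.filter (fun i => 1 < x i) with hS
  have hSne : S.Nonempty := ⟨i0, by simp [hS, hi0]⟩
  set i := S.min' hSne with hidef
  refine ⟨Function.update x i (x i - 1), hx, hne, i, ?_, ?_, rfl⟩
  · have : i ∈ S := S.min'_mem hSne
    simpa [hS] using this
  · intro j hj hcon
    have hjS : j ∈ S := by simp [hS, hcon]
    exact absurd (S.min'_le j hjS) (not_le.mpr hj)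

/-- Auxiliary predicate: characterization of membership in `Qset n r τ j`. -/
def Pred {d : ℕ} (n : Fin d → ℕ) (r : (Fin d → ℕ) → (Fin d → ℕ) → Prop)
    (τ : ℕ → (Fin d → ℕ)) (j : ℕ) (x : Fin d → ℕ) : Prop :=
  x ∈ Om n ∧ (∀ l, 1 ≤ l → l < j → τ l ≠ x) ∧
  (x = (fun _ => 1) ∨ ∃ p, isArcG n p x ∧ (∃ m, 1 ≤ m ∧ m < j ∧ τ m = p) ∧
    ∀ y, isArcG n p y → y ≠ x → r y x → ∃ l, 1 ≤ l ∧ l < j ∧ τ l = y)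

/-- With `Ω`, a linear extension `≤*` (`r`) of the componentwise
order, the `≤*`-increasing enumeration `τ` of `Ω`, and the sets `Q_j` as defined:
for every `1 ≤ j ≤ |Ω|` we have `τ j ∈ Q_j`, and `τ l ∉ Q_j` for every `l < j`. -/
theorem stmt16 {d : ℕ} (hd : 1 ≤ d) (n : Fin d → ℕ) (hn : ∀ i, 1 ≤ n i)
    (r : (Fin d → ℕ) → (Fin d → ℕ) → Prop)
    (hrefl : ∀ x ∈ Om n, r x x)
    (hanti : ∀ x ∈ Om n, ∀ y ∈ Om n, r x y → r y x → x = y)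
    (htrans : ∀ x ∈ Om n, ∀ y ∈ Om n, ∀ z ∈ Om n, r x y → r y z → r x z)
    (htot : ∀ x ∈ Om n, ∀ y ∈ Om n, r x y ∨ r y x)
    (hext : ∀ x ∈ Om n, ∀ y ∈ Om n, compLE x y → r x y)
    (τ : ℕ → (Fin d → ℕ))
    (hmem : ∀ j, 1 ≤ j → j ≤ (Om n).card → τ j ∈ Om n)
    (hsurj : ∀ x ∈ Om n, ∃ j, 1 ≤ j ∧ j ≤ (Om n).card ∧ τ j = x)
    (hsorted : ∀ j k, 1 ≤ j → j < k → k ≤ (Om n).card → r (τ j) (τ k) ∧ τ j ≠ τ k) :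
    ∀ j, 1 ≤ j → j ≤ (Om n).card →
      τ j ∈ Qset n r τ j ∧ ∀ l, 1 ≤ l → l < j → τ l ∉ Qset n r τ j := by
  -- the all-ones root
  have hOm1 : (fun _ => 1 : Fin d → ℕ) ∈ Om n := mem_Om.mpr fun i => ⟨le_refl 1, hn i⟩
  have hrlow : ∀ x ∈ Om n, r (fun _ => 1) x := fun x hx =>
    hext _ hOm1 _ hx (fun i => (mem_Om.mp hx i).1)
  have hτ1 : τ 1 = fun _ => 1 := by
    obtain ⟨l, hl1, hlc, hlx⟩ := hsurj _ hOm1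
    rcases eq_or_lt_of_le hl1 with h | h
    · rw [← h] at hlx; exact hlx
    · obtain ⟨hr1, hne1⟩ := hsorted 1 l le_rfl h hlc
      have h2 : r (τ l) (τ 1) := by
        rw [hlx]; exact hrlow (τ 1) (hmem 1 le_rfl (le_trans h.le hlc))
      exact absurd (hanti _ (hmem 1 le_rfl (le_trans h.le hlc)) _ (hmem l hl1 hlc) hr1 h2)
        hne1
  -- anything `r`-below `τ j` and distinct from it appears strictly earlier
  have hearlier : ∀ x ∈ Om n, ∀ j, 1 ≤ j → j ≤ (Om n).card → r x (τ j) → x ≠ τ j →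
      ∃ l, 1 ≤ l ∧ l < j ∧ τ l = x := by
    intro x hx j hj1 hjc hrx hne
    obtain ⟨l, hl1, hlc, hlx⟩ := hsurj x hx
    refine ⟨l, hl1, ?_, hlx⟩
    by_contra hcon
    push_neg at hcon
    rcases eq_or_lt_of_le hcon with h | h
    · exact hne (by rw [← hlx, ← h])
    · obtain ⟨hr1, hne1⟩ := hsorted j l hj1 h hlc
      rw [hlx] at hr1 hne1
      exact hne (hanti x hx (τ j) (hmem j hj1 hjc) hrx hr1)
  have harc_r : ∀ p x : Fin d → ℕ, isArcG n p x → r p x := fun p x h =>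
    hext p (arc_parent_mem h) x h.1 (arc_le h)
  -- τ j itself satisfies the characterization
  have hP : ∀ j, 1 ≤ j → j ≤ (Om n).card → Pred n r τ j (τ j) := by
    intro j hj1 hjc
    refine ⟨hmem j hj1 hjc, fun l hl1 hlj => (hsorted l j hl1 hlj hjc).2, ?_⟩
    by_cases hr1 : τ j = fun _ => 1
    · exact Or.inl hr1
    · obtain ⟨p, hp⟩ := arc_exists (hmem j hj1 hjc) hr1
      refine Or.inr ⟨p, hp, ?_, ?_⟩
      · exact hearlier p (arc_parent_mem hp) j hj1 hjc (harc_r p _ hp) (arc_ne hp)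
      · intro y hy hyne hyr
        exact hearlier y hy.1 j hj1 hjc hyr hyne
  -- main characterization, by induction on j
  have hchar : ∀ j, 1 ≤ j → j ≤ (Om n).card →
      ∀ x, x ∈ Qset n r τ j ↔ Pred n r τ j x := by
    intro j hj1
    induction j, hj1 using Nat.le_induction with
    | base =>
      intro hjc x
      constructor
      · intro hx
        have hx1 : x = τ 1 := hx
        refine ⟨hx1 ▸ hmem 1 le_rfl hjc, fun l hl1 hl => by omega, Or.inl ?_⟩
        rw [hx1, hτ1]
      · rintro ⟨hxOm, -, hthird⟩
        rcases hthird with h1 | ⟨p, hp, ⟨m, hm1, hm0, -⟩, -⟩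
        · show x = τ 1
          rw [h1, hτ1]
        · omega
    | succ j hj ih =>
      intro hjc x
      have hjc' : j ≤ (Om n).card := by omega
      have ihx := ih hjc'
      have hτjOm : τ j ∈ Om n := hmem j hj hjc'
      obtain ⟨k, rfl⟩ : ∃ k, j = k + 1 := ⟨j - 1, by omega⟩
      have hQ : Qset n r τ (k + 1 + 1) =
          (Qset n r τ (k + 1) \ {τ (k + 1)}) ∪
            leastSet r (ChildG n (τ (k + 1))) ∪ leastSet r (SibG n r (τ (k + 1))) := rfl
      set j := k + 1 with hjdef
      rw [hQ]
      constructor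
      · rintro ((⟨hxQ, hxne⟩ | hxC) | hxS)
        · -- came from Q_j minus τ j
          obtain ⟨h1, h2, h3⟩ := (ihx x).mp hxQ
          have hxne' : x ≠ τ j := hxne
          refine ⟨h1, ?_, ?_⟩
          · intro l hl1 hl
            rcases Nat.lt_or_ge l j with h | h
            · exact h2 l hl1 h
            · have : l = j := by omega
              rw [this]; exact fun hc => hxne' hc.symm
          · rcases h3 with h | ⟨p, hp, ⟨m, hm1, hmj, hmp⟩, hsib⟩
            · exact Or.inl h
            · refine Or.inr ⟨p, hp, ⟨m, hm1, by omega, hmp⟩, ?_⟩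
              intro y hy hyne hyr
              obtain ⟨l, hl1, hl, hly⟩ := hsib y hy hyne hyr
              exact ⟨l, hl1, by omega, hly⟩
        · -- least child of τ j
          obtain ⟨hxc, hleast⟩ := hxC
          have hxc' : isArcG n (τ j) x := hxc
          have hxOm : x ∈ Om n := hxc'.1
          have hrjx : r (τ j) x := harc_r _ _ hxc'
          have hjnex : τ j ≠ x := arc_ne hxc'
          have hnotbefore : ∀ l, 1 ≤ l → l < j + 1 → τ l ≠ x := by
            intro l hl1 hl hcon
            rcases Nat.lt_or_ge l j with h | h
            · obtain ⟨hr1, hne1⟩ := hsorted l j hl1 h hjc'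
              rw [hcon] at hr1 hne1
              exact hne1 (hanti x hxOm (τ j) hτjOm hr1 hrjx)
            · have : l = j := by omega
              rw [this] at hcon
              exact hjnex hcon
          refine ⟨hxOm, hnotbefore, Or.inr ⟨τ j, hxc', ⟨j, hj, by omega, rfl⟩, ?_⟩⟩
          intro y hy hyne hyr
          have : r x y := hleast y hy
          exact absurd (hanti y hy.1 x hxOm hyr this) hyne
        · -- least later sibling of τ j
          obtain ⟨⟨p, hpj, hpx, hjx, hjne⟩, hleast⟩ := hxS
          have hxOm : x ∈ Om n := hpx.1
          obtain ⟨-, -, hPj3⟩ := hP j hj hjc'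
          rcases hPj3 with h1 | ⟨q, hq, ⟨m, hm1, hmj, hmq⟩, hsibj⟩
          · exact absurd h1 hpj.2.1
          have hqp : q = p := arc_unique hq hpj
          subst hqp
          have hnotbefore : ∀ l, 1 ≤ l → l < j + 1 → τ l ≠ x := by
            intro l hl1 hl hcon
            rcases Nat.lt_or_ge l j with h | h
            · obtain ⟨hr1, hne1⟩ := hsorted l j hl1 h hjc'
              rw [hcon] at hr1 hne1
              exact hne1 (hanti x hxOm (τ j) hτjOm hr1 hjx)
            · have : l = j := by omega
              rw [this] at hcon
              exact hjne hcon
          refine ⟨hxOm, hnotbefore, Or.inr ⟨q, hpx, ⟨m, hm1, by omega, hmq⟩, ?_⟩⟩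
          intro y hy hyne hyr
          by_cases hyj : y = τ j
          · exact ⟨j, hj, by omega, hyj.symm⟩
          · rcases htot y hy.1 (τ j) hτjOm with h1 | h2
            · obtain ⟨l, hl1, hl, hly⟩ := hsibj y hy hyj h1
              exact ⟨l, hl1, by omega, hly⟩
            · have hymem : y ∈ SibG n r (τ j) := ⟨q, hpj, hy, h2, Ne.symm hyj⟩
              have : r x y := hleast y hymem
              exact absurd (hanti y hy.1 x hxOm hyr this) hyne
      · rintro ⟨hxOm, hxT, hthird⟩
        rcases hthird with h1 | ⟨p, hpx, ⟨m, hm1, hmj1, hmp⟩, hsib⟩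
        · exact absurd (by rw [h1, hτ1] : τ 1 = x) (hxT 1 le_rfl (by omega))
        · rcases Nat.lt_or_ge m j with hmlt | hmge
          · -- parent appeared strictly before step j
            by_cases hjsib : isArcG n p (τ j) ∧ r (τ j) x ∧ τ j ≠ x
            · -- τ j is a sibling of x below it: x is least later sibling of τ j
              refine Or.inr ⟨⟨p, hjsib.1, hpx, hjsib.2.1, hjsib.2.2⟩, ?_⟩
              intro y hy
              obtain ⟨p', hp'j, hp'y, hjy, hjney⟩ := hy
              have hpp : p' = p := arc_unique hp'j hjsib.1
              rw [hpp] at hp'y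
              rcases htot x hxOm y hp'y.1 with h1 | h2
              · exact h1
              · by_cases hyx : y = x
                · rw [hyx]; exact hrefl x hxOm
                · obtain ⟨l, hl1, hl, hly⟩ := hsib y hp'y hyx h2
                  rcases Nat.lt_or_ge l j with h | h
                  · obtain ⟨hr1, hne1⟩ := hsorted l j hl1 h hjc'
                    rw [hly] at hr1 hne1
                    exact absurd (hanti y hp'y.1 (τ j) hτjOm hr1 hjy) hne1
                  · have : l = j := by omega
                    rw [this] at hly
                    exact absurd hly hjney
            · -- x was already in Q_j
              refine Or.inl (Or.inl ⟨(ihx x).mpr ⟨hxOm, fun l hl1 hl =>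
                hxT l hl1 (by omega), Or.inr ⟨p, hpx, ⟨m, hm1, hmlt, hmp⟩, ?_⟩⟩,
                fun hc => hxT j hj (by omega) hc.symm⟩)
              intro y hy hyne hyr
              obtain ⟨l, hl1, hl, hly⟩ := hsib y hy hyne hyr
              refine ⟨l, hl1, ?_, hly⟩
              rcases Nat.lt_or_ge l j with h | h
              · exact h
              · have hlj : l = j := by omega
                rw [hlj] at hly
                exact absurd ⟨hly ▸ hy, hly ▸ hyr, hly ▸ hyne⟩ hjsib
          · -- parent is exactly τ j: x is its least child
            have hmj : m = j := by omega
            rw [hmj] at hmp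
            have hpx' : isArcG n (τ j) x := hmp ▸ hpx
            refine Or.inl (Or.inr ⟨hpx', ?_⟩)
            intro y hy
            have hy' : isArcG n p y := by rw [← hmp]; exact hy
            rcases htot x hxOm y hy.1 with h1 | h2
            · exact h1
            · by_cases hyx : y = x
              · rw [hyx]; exact hrefl x hxOm
              · obtain ⟨l, hl1, hl, hly⟩ := hsib y hy' hyx h2
                have hrjy : r (τ j) y := harc_r _ _ hy
                have hjney : τ j ≠ y := arc_ne hy
                rcases Nat.lt_or_ge l j with h | h
                · obtain ⟨hr1, hne1⟩ := hsorted l j hl1 h hjc'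
                  rw [hly] at hr1 hne1
                  exact absurd (hanti (τ j) hτjOm y hy.1 hrjy hr1) hjney
                · have : l = j := by omega
                  rw [this] at hly
                  exact absurd hly hjney
  intro j hj1 hjc
  refine ⟨(hchar j hj1 hjc (τ j)).mpr (hP j hj1 hjc), ?_⟩
  intro l hl1 hlj hmem'
  exact ((hchar j hj1 hjc _).mp hmem').2.1 l hl1 hlj rfl
end

section
/- Let d ≥ 1 and n_1,…,n_d ≥ 1 be integers, Ω = ∏_{i=1}^d {1,…,n_i} with componentwise order ≤, and ≤* a linear extension of ≤, with enumeration τ^{(1)} <* ⋯ <* τ^{(|Ω|)} and I_j = {τ^{(1)},…,τ^{(j)}} (I_0 = ∅). Let Γ, Child, child*, sibling*, and the sets Q_j be as defined, and define P_1 = {τ^{(1)}} and, for j ≥ 2, P_j = {least(Child(τ) ∖ I_{j−1}) : τ ∈ I_{j−1} with Child(τ) ∖ I_{j−1} ≠ ∅}. Then P_j = Q_j for every j with 1 ≤ j ≤ |Ω|. -/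
/-- The initial segment `I_j = {τ 1, …, τ j}` of the enumeration (`I_0 = ∅`). -/
def Iset {d : ℕ} (τ : ℕ → (Fin d → ℕ)) (j : ℕ) : Set (Fin d → ℕ) :=
  {x | ∃ l, 1 ≤ l ∧ l ≤ j ∧ τ l = x}

/-- The sets `P_j`: `P_1 = {τ 1}` and, for `j ≥ 2`,
`P_j = {least(Child(t) \ I_{j-1}) : t ∈ I_{j-1}, Child(t) \ I_{j-1} ≠ ∅}`. -/
def Pset {d : ℕ} (n : Fin d → ℕ) (r : (Fin d → ℕ) → (Fin d → ℕ) → Prop)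
    (τ : ℕ → (Fin d → ℕ)) : ℕ → Set (Fin d → ℕ)
  | 0 => ∅
  | 1 => {τ 1}
  | j + 2 => {x | ∃ t ∈ Iset τ (j + 1), x ∈ leastSet r (ChildG n t \ Iset τ (j + 1))}

/-- With `Ω`, a linear extension `≤*` (`r`) of the componentwise
order, the `≤*`-increasing enumeration `τ` of `Ω`, and `Γ`, `Child`, `child*`,
`sibling*`, `Q_j`, `P_j` as defined: `P_j = Q_j` for every `1 ≤ j ≤ |Ω|`. -/
theorem stmt17 {d : ℕ} (hd : 1 ≤ d) (n : Fin d → ℕ) (hn : ∀ i, 1 ≤ n i)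
    (r : (Fin d → ℕ) → (Fin d → ℕ) → Prop)
    (hrefl : ∀ x ∈ Om n, r x x)
    (hanti : ∀ x ∈ Om n, ∀ y ∈ Om n, r x y → r y x → x = y)
    (htrans : ∀ x ∈ Om n, ∀ y ∈ Om n, ∀ z ∈ Om n, r x y → r y z → r x z)
    (htot : ∀ x ∈ Om n, ∀ y ∈ Om n, r x y ∨ r y x)
    (hext : ∀ x ∈ Om n, ∀ y ∈ Om n, compLE x y → r x y)
    (τ : ℕ → (Fin d → ℕ))
    (hmem : ∀ j, 1 ≤ j → j ≤ (Om n).card → τ j ∈ Om n)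
    (hsurj : ∀ x ∈ Om n, ∃ j, 1 ≤ j ∧ j ≤ (Om n).card ∧ τ j = x)
    (hsorted : ∀ j k, 1 ≤ j → j < k → k ≤ (Om n).card → r (τ j) (τ k) ∧ τ j ≠ τ k) :
    ∀ j, 1 ≤ j → j ≤ (Om n).card → Pset n r τ j = Qset n r τ j := by

  classical
  -- Notation
  set N := (Om n).card with hNdef
  have hones : (fun _ => 1 : Fin d → ℕ) ∈ Om n := by
    simp only [Om, Fintype.mem_piFinset, Finset.mem_Icc]
    intro i; exact ⟨le_rfl, hn i⟩
  have hN1 : 1 ≤ N := Finset.card_pos.mpr ⟨_, hones⟩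
  have hOmval : ∀ x ∈ Om n, ∀ i, 1 ≤ x i ∧ x i ≤ n i := by
    intro x hx i
    simp only [Om, Fintype.mem_piFinset, Finset.mem_Icc] at hx
    exact hx i
  -- basic arc facts
  have harc : ∀ t t', isArcG n t t' → t ∈ Om n ∧ t' ∈ Om n ∧ compLE t t' ∧ t ≠ t' := by
    rintro t t' ⟨ht', hne, i, hi1, hfirst, hupd⟩
    have ht'v := hOmval t' ht'
    have htv : t ∈ Om n := by
      simp only [Om, Fintype.mem_piFinset, Finset.mem_Icc]
      intro j
      rcases eq_or_ne j i with rfl | hji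
      · rw [hupd]; simp only [Function.update_self]
        exact ⟨by omega, by have := (ht'v j).2; omega⟩
      · rw [hupd]; rw [Function.update_of_ne hji]; exact ht'v j
    have hle : compLE t t' := by
      intro j
      rcases eq_or_ne j i with rfl | hji
      · rw [hupd]; simp only [Function.update_self]; omega
      · rw [hupd, Function.update_of_ne hji]
    have hnet : t ≠ t' := by
      intro h
      have : t i = t' i := by rw [h]
      rw [hupd] at this; simp only [Function.update_self] at this; omega
    exact ⟨htv, ht', hle, hnet⟩
  have hparent_uniq : ∀ p q t', isArcG n p t' → isArcG n q t' → p = q := by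
    rintro p q t' ⟨_, _, i, hi1, hfi, hpi⟩ ⟨_, _, i', hi1', hfi', hpi'⟩
    have : i = i' := by
      rcases lt_trichotomy i i' with h | h | h
      · exact absurd hi1 (hfi' i h)
      · exact h
      · exact absurd hi1' (hfi i' h)
    subst this; rw [hpi, hpi']
  -- uniqueness of index
  have hinj : ∀ l k, 1 ≤ l → l ≤ N → 1 ≤ k → k ≤ N → τ l = τ k → l = k := by
    intro l k hl1 hlN hk1 hkN h
    rcases lt_trichotomy l k with hlt | he | hgt
    · exact absurd h (hsorted l k hl1 hlt hkN).2
    · exact he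
    · exact absurd h.symm (hsorted k l hk1 hgt hlN).2
  -- characterization of not being in an initial segment
  have hnotI : ∀ m, 1 ≤ m → m ≤ N → ∀ x ∈ Om n, (x ∉ Iset τ m ↔ (r (τ m) x ∧ x ≠ τ m)) := by
    intro m hm1 hmN x hx
    obtain ⟨l, hl1, hlN, hlx⟩ := hsurj x hx
    constructor
    · intro hni
      have hlm : m < l := by
        by_contra h
        exact hni ⟨l, hl1, by omega, hlx⟩
      have := hsorted m l hm1 hlm hlN
      rw [hlx] at this
      exact ⟨this.1, fun h => this.2 h.symm⟩
    · rintro ⟨hr, hne⟩ ⟨l', hl'1, hl'm, hl'x⟩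
      have hl'N : l' ≤ N := le_trans hl'm hmN
      have hl'lt : l' < m := by
        rcases eq_or_lt_of_le hl'm with h | h
        · exact absurd (h ▸ hl'x) (fun hh => hne hh.symm)
        · exact h
      have := hsorted l' m hl'1 hl'lt hmN
      rw [hl'x] at this
      exact hne (hanti x hx (τ m) (hmem m hm1 hmN) this.1 hr)
  -- τ (m+1) is r-least outside I_m
  have hleast : ∀ m, m + 1 ≤ N → ∀ x ∈ Om n, x ∉ Iset τ m → r (τ (m+1)) x := by
    intro m hmN x hx hni
    obtain ⟨l, hl1, hlN, hlx⟩ := hsurj x hx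
    have hlm : m < l := by
      by_contra h
      exact hni ⟨l, hl1, by omega, hlx⟩
    rcases eq_or_lt_of_le (by omega : m + 1 ≤ l) with h | h
    · rw [← h] at hlx; rw [← hlx]; exact hrefl _ (hmem (m+1) (by omega) hmN)
    · have := hsorted (m+1) l (by omega) h hlN
      rw [hlx] at this; exact this.1
  -- pivot not in earlier segment
  have hpivotNotI : ∀ m, m + 1 ≤ N → τ (m+1) ∉ Iset τ m := by
    rintro m hmN ⟨l, hl1, hlm, hlx⟩
    have := hinj l (m+1) hl1 (by omega) (by omega) hmN hlx
    omega
  -- parent is in earlier segment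
  have hparentI : ∀ m, m + 1 ≤ N → ∀ p, isArcG n p (τ (m+1)) → p ∈ Iset τ m := by
    intro m hmN p hp
    obtain ⟨hpOm, htOm, hple, hpne⟩ := harc _ _ hp
    obtain ⟨l, hl1, hlN, hlp⟩ := hsurj p hpOm
    have hrp : r p (τ (m+1)) := hext p hpOm _ htOm hple
    have hlm : l ≤ m := by
      by_contra h
      have hlt : m + 1 ≤ l := by omega
      rcases eq_or_lt_of_le hlt with he | hgt
      · rw [← he] at hlp; exact hpne hlp.symm
      · have := hsorted (m+1) l (by omega) hgt hlN
        rw [hlp] at this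
        exact hpne (hanti p hpOm _ htOm hrp this.1)
    exact ⟨l, hl1, hlm, hlp⟩
  -- children of τ m are not in I_m
  have hChildSelf : ∀ m, 1 ≤ m → m ≤ N → ChildG n (τ m) \ Iset τ m = ChildG n (τ m) := by
    intro m hm1 hmN
    ext s
    simp only [Set.mem_diff, and_iff_left_iff_imp]
    intro hs
    obtain ⟨htOm, hsOm, hle, hne⟩ := harc _ _ hs
    exact (hnotI m hm1 hmN s hsOm).mpr ⟨hext _ htOm _ hsOm hle, fun h => hne h.symm⟩
  -- SibG description
  have hSib : ∀ m, 1 ≤ m → m ≤ N → ∀ p, isArcG n p (τ m) →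
      SibG n r (τ m) = ChildG n p \ Iset τ m := by
    intro m hm1 hmN p hp
    ext s
    constructor
    · rintro ⟨q, hq, hqs, hrs, hne⟩
      have : q = p := hparent_uniq q p _ hq hp
      subst this
      have hsOm := (harc _ _ hqs).2.1
      exact ⟨hqs, (hnotI m hm1 hmN s hsOm).mpr ⟨hrs, fun h => hne h.symm⟩⟩
    · rintro ⟨hs, hns⟩
      have hsOm := (harc _ _ hs).2.1
      have := (hnotI m hm1 hmN s hsOm).mp hns
      exact ⟨p, hp, hs, this.1, fun h => this.2 h.symm⟩
  -- Iset step
  have hIstep : ∀ m, Iset τ (m+1) = Iset τ m ∪ {τ (m+1)} := by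
    intro m
    ext x
    simp only [Iset, Set.mem_setOf_eq, Set.mem_union, Set.mem_singleton_iff]
    constructor
    · rintro ⟨l, hl1, hlm, hlx⟩
      rcases eq_or_lt_of_le hlm with he | hlt
      · right; rw [← he, hlx]
      · left; exact ⟨l, hl1, by omega, hlx⟩
    · rintro (⟨l, hl1, hlm, hlx⟩ | h)
      · exact ⟨l, hl1, by omega, hlx⟩
      · exact ⟨m+1, by omega, le_rfl, h.symm⟩
  -- removing pivot from Child t when pivot is not a child of t
  have hChildDiff : ∀ m t, τ (m+1) ∉ ChildG n t →
      ChildG n t \ Iset τ (m+1) = ChildG n t \ Iset τ m := by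
    intro m t hnt
    rw [hIstep m]
    ext s
    simp only [Set.mem_diff, Set.mem_union, Set.mem_singleton_iff, not_or]
    constructor
    · rintro ⟨hs, h1, _⟩; exact ⟨hs, h1⟩
    · rintro ⟨hs, h1⟩
      exact ⟨hs, h1, fun h => hnt (h ▸ hs)⟩
  -- τ 1 = (1, …, 1)
  have hτ1 : τ 1 = fun _ => 1 := by
    obtain ⟨l, hl1, hlN, hlx⟩ := hsurj _ hones
    rcases eq_or_lt_of_le hl1 with he | hlt
    · rw [← he] at hlx; exact hlx
    · have h1 := hsorted 1 l (le_rfl) hlt hlN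
      have hr1 : r (fun _ => 1) (τ 1) := by
        apply hext _ hones _ (hmem 1 le_rfl hN1)
        intro i; exact (hOmval _ (hmem 1 le_rfl hN1) i).1
      rw [hlx] at h1
      exact absurd (hanti _ (hmem 1 le_rfl hN1) _ hones h1.1 hr1) h1.2
  -- main induction
  intro j
  induction j with
  | zero => intro h; omega
  | succ k ih =>
    intro _ hkN
    rcases Nat.eq_zero_or_pos k with rfl | hk1
    · rfl
    · obtain ⟨k', rfl⟩ : ∃ k', k = k' + 1 := ⟨k - 1, by omega⟩
      have hPQ : Pset n r τ (k'+1) = Qset n r τ (k'+1) := ih (by omega) (by omega)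
      have hm1 : 1 ≤ k' + 1 := by omega
      have hmN : k' + 1 ≤ N := by omega
      have hm1N : k' + 1 + 1 ≤ N := hkN
      have hpivOm : τ (k'+1) ∈ Om n := hmem _ hm1 hmN
      show Pset n r τ (k'+1+1) = Qset n r τ (k'+1+1)
      have hPdef : Pset n r τ (k'+1+1) =
          {x | ∃ t ∈ Iset τ (k'+1), x ∈ leastSet r (ChildG n t \ Iset τ (k'+1))} := rfl
      have hQdef : Qset n r τ (k'+1+1) =
          (Qset n r τ (k'+1) \ {τ (k'+1)}) ∪
            leastSet r (ChildG n (τ (k'+1))) ∪ leastSet r (SibG n r (τ (k'+1))) := rfl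
      rw [hPdef, hQdef]
      ext x
      simp only [Set.mem_setOf_eq, Set.mem_union]
      constructor
      · rintro ⟨t, htI, hx⟩
        by_cases hts : t = τ (k'+1)
        · subst hts
          rw [hChildSelf (k'+1) hm1 hmN] at hx
          exact Or.inl (Or.inr hx)
        · obtain ⟨l, hl1, hlm, hlt⟩ := htI
          have hlk' : l ≤ k' := by
            rcases eq_or_lt_of_le hlm with he | hlt'
            · exact absurd (he ▸ hlt).symm hts
            · omega
          by_cases hpar : isArcG n t (τ (k'+1))
          · rw [← hSib (k'+1) hm1 hmN t hpar] at hx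
            exact Or.inr hx
          · have hnc : τ (k'+1) ∉ ChildG n t := hpar
            have hxnot : x ∉ Iset τ (k'+1) := hx.1.2
            rw [hChildDiff k' t hnc] at hx
            have hk'1 : 1 ≤ k' := le_trans hl1 hlk'
            obtain ⟨k'', rfl⟩ : ∃ k'', k' = k'' + 1 := ⟨k' - 1, by omega⟩
            have hxP : x ∈ Pset n r τ (k''+1+1) := ⟨t, ⟨l, hl1, hlk', hlt⟩, hx⟩
            rw [hPQ] at hxP
            have hxne : x ≠ τ (k''+1+1) := by
              intro h
              exact hxnot ⟨k''+1+1, by omega, le_rfl, h.symm⟩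
            exact Or.inl (Or.inl ⟨hxP, hxne⟩)
      · rintro ((⟨hxQ, hxne⟩ | hxC) | hxS)
        · rw [← hPQ] at hxQ
          rcases Nat.eq_zero_or_pos k' with rfl | hk'1
          · exact absurd hxQ hxne
          · obtain ⟨k'', rfl⟩ : ∃ k'', k' = k'' + 1 := ⟨k' - 1, by omega⟩
            obtain ⟨t, htI, hx⟩ := hxQ
            have hnc : τ (k''+1+1) ∉ ChildG n t := by
              intro hc
              have harcT : isArcG n t (τ (k''+1+1)) := hc
              have hpivIn : τ (k''+1+1) ∈ ChildG n t \ Iset τ (k''+1) :=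
                ⟨hc, hpivotNotI (k''+1) (by omega)⟩
              have hr1 : r x (τ (k''+1+1)) := hx.2 _ hpivIn
              have hxOm := (harc _ _ hx.1.1).2.1
              have hr2 : r (τ (k''+1+1)) x := hleast (k''+1) (by omega) x hxOm hx.1.2
              exact hxne (hanti x hxOm _ (hmem _ (by omega) (by omega)) hr1 hr2)
            refine ⟨t, ?_, ?_⟩
            · rw [hIstep (k''+1)]; exact Or.inl htI
            · rw [hChildDiff (k''+1) t hnc]; exact hx
        · exact ⟨τ (k'+1), ⟨k'+1, hm1, le_rfl, rfl⟩, by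
            rw [hChildSelf (k'+1) hm1 hmN]; exact hxC⟩
        · obtain ⟨p, hp, _, _, _⟩ := hxS.1
          have hSeq := hSib (k'+1) hm1 hmN p hp
          have hpI : p ∈ Iset τ k' := hparentI k' hmN p hp
          refine ⟨p, ?_, ?_⟩
          · obtain ⟨l, hl1, hlm, hlp⟩ := hpI
            exact ⟨l, hl1, by omega, hlp⟩
          · rw [← hSeq]; exact hxS
end
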